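/- Let W be an ε-noise channel (0 ≤ ε < 1) with input alphabet X and output alphabet Y. Then for every n ≥ 1 and every PMF P on X^n that is uniform over its support, Σ_{y ∈ supp(PW^n)} (PW^n)(y) / P(X^n(y)) ≤ ( e^{C_sp(W)} + ε·|X|·(|Y|−1) )^n, where supp(PW^n) = {y ∈ Y^n : (PW^n)(y) > 0}. -/

import Mathlib

/-!
Write `S` for the support of `P`. Since `P` is uniform on `S`, the term of `y` is the average of
`Wⁿ(y|x)` over the `x ∈ S` that reach `y`, and `Wⁿ(y|x) ≤ ε ^ d(x, y)`. Group the pairs `(x, y)`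
by their mismatch pattern `g` (the coordinates where they differ, with the letters there). In one
class `y` is determined by `x`, all inputs agree on the `|g|` differing coordinates, and every
input of the class that reaches `x` also reaches `y`; so the class contributes at most
`ε ^ |g| * ∑ₓ 1 / #{x' in the class reaching x}`.

Greedily picking an input with fewest predecessors and discarding those predecessors bounds this sum
by the size `M` of a staircase code (`W(cⱼ|cᵢ) = 0` for `i < j`) on the other `n - |g|`
coordinates. Among the `k`-tuples of codewords, those with a fixed sum of indices form a Sperner
code, and one such class has size at least `M ^ k / (k M)`; letting `k → ∞` gives
`M ≤ exp ((n - |g|) C_sp)`. Summing `ε ^ |g| * exp ((n - |g|) C_sp)` over the patterns `g` gives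
`(exp C_sp + ε |X| (|Y| - 1)) ^ n`.
-/

open scoped Classical
open Real Finset

/-- The `n`-letter extension of the channel `W`. -/
noncomputable def Wn {Y : Type*} (W : Y → Y → ℝ) (n : ℕ) (x y : Fin n → Y) : ℝ :=
  ∏ j, W (x j) (y j)

/-- The Sperner capacity of the channel `W` with input alphabet `X ⊆ Y`. -/
noncomputable def Csp {Y : Type*} [Fintype Y] (X : Finset Y) (W : Y → Y → ℝ) : ℝ :=
  sSup {r : ℝ | ∃ (n M : ℕ) (c : Fin M → Fin n → Y), 1 ≤ n ∧ 1 ≤ M ∧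
    (∀ m j, c m j ∈ X) ∧ (∀ m m' : Fin M, m ≠ m' → Wn W n (c m') (c m) = 0) ∧
    r = Real.log M / n}

theorem Finset.exists_lt_of_sum_eq_of_ne {ι M : Type*} [Fintype ι] [AddCommMonoid M]
    [LinearOrder M] [IsOrderedCancelAddMonoid M] {a b : ι → M}
    (h : ∑ i, a i = ∑ i, b i) (hne : a ≠ b) : ∃ i, a i < b i := by
  by_contra! hle
  exact hne (funext fun i => ((sum_eq_sum_iff_of_le fun i _ => hle i).1 h.symm i (mem_univ i)).symm)

open Filter Topology in
theorem le_of_forall_nat_mul_le_log_add {a b c : ℝ}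
    (h : ∀ k : ℕ, 1 ≤ k → k * a ≤ log k + c + k * b) : a ≤ b := by
  have hlim : Tendsto (fun k : ℕ => (log k + c) / k) atTop (𝓝 0) := by
    have hlog : Tendsto (fun k : ℕ => log k / k) atTop (𝓝 0) := by
      simpa [Function.comp_def] using (tendsto_pow_log_div_mul_add_atTop 1 0 1 one_ne_zero).comp
        tendsto_natCast_atTop_atTop
    simpa [add_div] using hlog.add (tendsto_const_div_atTop_nhds_zero_nat c)
  suffices a - b ≤ 0 by linarith
  refine ge_of_tendsto hlim (eventually_atTop.2 ⟨1, fun k hk => ?_⟩)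
  rw [le_div_iff₀ (by exact_mod_cast hk)]
  linarith [h k hk]

/-- Greedily: take `u₀` with the fewest `r`-predecessors and discard them; the discarded elements
carry total weight at most `1`. -/
theorem Finset.exists_staircase_sum_inv_card_le {β : Type*} (r : β → β → Prop) (U : Finset β)
    (hr : ∀ u ∈ U, r u u) :
    ∃ (M : ℕ) (c : Fin M → β), (∀ i, c i ∈ U) ∧ (∀ i j, i < j → ¬ r (c i) (c j)) ∧
      ∑ u ∈ U, (#(U.filter (r · u)) : ℝ)⁻¹ ≤ M := by
  induction U using Finset.strongInduction with
  | H U ih =>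
  rcases U.eq_empty_or_nonempty with rfl | hU
  · exact ⟨0, Fin.elim0, fun i => i.elim0, fun i => i.elim0, by simp⟩
  obtain ⟨u₀, hu₀, hmin⟩ := U.exists_min_image (fun u => #(U.filter (r · u))) hU
  set D := U.filter (r · u₀)
  have hu₀D : u₀ ∈ D := mem_filter.2 ⟨hu₀, hr u₀ hu₀⟩
  obtain ⟨M, c, hcU, hc, hsum⟩ := ih (U \ D) (sdiff_ssubset (filter_subset _ _) ⟨u₀, hu₀D⟩)
    fun u hu => hr u (mem_sdiff.1 hu).1
  refine ⟨M + 1, Fin.snoc c u₀, fun i => ?_, fun i j hij => ?_, ?_⟩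
  · induction i using Fin.lastCases with
    | last => simpa using hu₀
    | cast i => simpa using (mem_sdiff.1 (hcU i)).1
  · induction j using Fin.lastCases with
    | last =>
      induction i using Fin.lastCases with
      | last => exact absurd hij (lt_irrefl _)
      | cast i =>
        simp only [Fin.snoc_castSucc, Fin.snoc_last]
        exact fun h => (mem_sdiff.1 (hcU i)).2 (mem_filter.2 ⟨(mem_sdiff.1 (hcU i)).1, h⟩)
    | cast j =>
      induction i using Fin.lastCases with
      | last => exact absurd hij (not_lt.2 (Fin.le_last _))
      | cast i => simpa using hc i j (Fin.castSucc_lt_castSucc_iff.1 hij)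
  · have hDpos : (0 : ℝ) < #D := by exact_mod_cast card_pos.2 ⟨u₀, hu₀D⟩
    have hD : ∑ u ∈ D, (#(U.filter (r · u)) : ℝ)⁻¹ ≤ 1 := by
      calc ∑ u ∈ D, (#(U.filter (r · u)) : ℝ)⁻¹ ≤ ∑ _u ∈ D, (#D : ℝ)⁻¹ :=
            sum_le_sum fun u hu => inv_anti₀ hDpos (by exact_mod_cast hmin u (mem_filter.1 hu).1)
        _ = 1 := by rw [sum_const, nsmul_eq_mul, mul_inv_cancel₀ hDpos.ne']
    have hrest : ∑ u ∈ U \ D, (#(U.filter (r · u)) : ℝ)⁻¹ ≤ M := by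
      refine (sum_le_sum fun u hu => inv_anti₀ ?_ ?_).trans hsum
      · have hu' : u ∈ (U \ D).filter (r · u) := mem_filter.2 ⟨hu, hr u (mem_sdiff.1 hu).1⟩
        exact_mod_cast card_pos.2 ⟨u, hu'⟩
      · exact_mod_cast card_le_card (filter_subset_filter (r · u) (sdiff_subset (t := D)))
    rw [← sum_sdiff (filter_subset (r · u₀) U), Nat.cast_succ]
    exact add_le_add hrest hD

theorem sum_mul_div_sum_filter_pos_eq {α : Type*} [Fintype α] {P K : α → ℝ} {c : ℝ}
    (hP : ∀ x, P x ≠ 0 → P x = c) (hK : ∀ x, P x ≠ 0 → 0 ≤ K x) (hPK : 0 < ∑ x, P x * K x) :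
    (∑ x, P x * K x) / (∑ x ∈ univ.filter fun x => 0 < K x, P x) =
      ∑ x ∈ (univ.filter fun x => P x ≠ 0).filter fun x => 0 < K x,
        K x / #((univ.filter fun x => P x ≠ 0).filter fun x => 0 < K x) := by
  set T := (univ.filter fun x => P x ≠ 0).filter fun x => 0 < K x
  have hnum : ∑ x, P x * K x = c * ∑ x ∈ T, K x := by
    rw [mul_sum, ← sum_subset (subset_univ T)]
    · exact sum_congr rfl fun x hx => by rw [hP x (mem_filter.1 (mem_filter.1 hx).1).2]
    · intro x _ hxT
      by_cases hx : P x = 0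
      · rw [hx, zero_mul]
      · have : K x = 0 := (hK x hx).antisymm' (not_lt.1 fun h => hxT (by simp [T, hx, h]))
        rw [this, mul_zero]
  have hden : ∑ x ∈ univ.filter fun x => 0 < K x, P x = c * #T := by
    have hT : T ⊆ univ.filter fun x => 0 < K x := fun x hx => by simp_all [T]
    rw [← sum_subset hT fun x hx hxT => by_contra fun hx' => hxT (by simp_all [T]),
      sum_congr rfl fun x hx => hP x (mem_filter.1 (mem_filter.1 hx).1).2, sum_const,
      nsmul_eq_mul, mul_comm]
  have hc : c ≠ 0 := by
    rintro rfl
    simp [hnum] at hPK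
  rw [hnum, hden, mul_div_mul_left _ _ hc, sum_div]

section Channel

variable {Y : Type*} {X : Finset Y} {W : Y → Y → ℝ}

theorem Wn_nonneg (hW0 : ∀ a ∈ X, ∀ b, 0 ≤ W a b) {n : ℕ} {x : Fin n → Y} (hx : ∀ j, x j ∈ X)
    (y : Fin n → Y) : 0 ≤ Wn W n x y :=
  prod_nonneg fun j _ => hW0 _ (hx j) _

theorem Wn_pos_iff (hW0 : ∀ a ∈ X, ∀ b, 0 ≤ W a b) {n : ℕ} {x : Fin n → Y} (hx : ∀ j, x j ∈ X)
    {y : Fin n → Y} : 0 < Wn W n x y ↔ ∀ j, 0 < W (x j) (y j) := by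
  refine ⟨fun h j => (hW0 _ (hx j) _).lt_of_ne fun h0 => h.ne' ?_, fun h => prod_pos fun j _ => h j⟩
  exact prod_eq_zero (mem_univ j) h0.symm

theorem Wn_self_pos (hdiag : ∀ a ∈ X, 0 < W a a) {n : ℕ} {x : Fin n → Y} (hx : ∀ j, x j ∈ X) :
    0 < Wn W n x x :=
  prod_pos fun j _ => hdiag _ (hx j)

def flattenWords {m k : ℕ} (w : Fin k → Fin m → Y) : Fin (m * k) → Y :=
  fun j => w (finProdFinEquiv.symm j).2 (finProdFinEquiv.symm j).1

theorem Wn_flattenWords {m k : ℕ} (v w : Fin k → Fin m → Y) :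
    Wn W (m * k) (flattenWords v) (flattenWords w) = ∏ l, Wn W m (v l) (w l) := by
  rw [Wn, ← finProdFinEquiv.prod_comp, Fintype.prod_prod_type, Finset.prod_comm]
  simp [flattenWords, Wn]

variable [Fintype Y]

theorem W_le_one (hW0 : ∀ a ∈ X, ∀ b, 0 ≤ W a b) (hW1 : ∀ a ∈ X, ∑ b, W a b = 1) {a : Y}
    (ha : a ∈ X) (b : Y) : W a b ≤ 1 :=
  hW1 a ha ▸ single_le_sum (fun b _ => hW0 a ha b) (mem_univ b)

theorem W_le_of_ne {ε : ℝ} (hW0 : ∀ a ∈ X, ∀ b, 0 ≤ W a b) (hW1 : ∀ a ∈ X, ∑ b, W a b = 1)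
    (hnoise : ∀ a ∈ X, 1 - ε ≤ W a a) {a b : Y} (ha : a ∈ X) (hab : a ≠ b) : W a b ≤ ε := by
  have hpair : W a a + W a b ≤ ∑ y, W a y := by
    rw [← sum_pair hab]
    exact sum_le_sum_of_subset_of_nonneg (subset_univ _) fun y _ _ => hW0 a ha y
  linarith [hnoise a ha, hW1 a ha]

theorem Wn_le_pow_card_ne {ε : ℝ} (hW0 : ∀ a ∈ X, ∀ b, 0 ≤ W a b)
    (hW1 : ∀ a ∈ X, ∑ b, W a b = 1) (hnoise : ∀ a ∈ X, 1 - ε ≤ W a a) {n : ℕ}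
    {x : Fin n → Y} (hx : ∀ j, x j ∈ X) (y : Fin n → Y) :
    Wn W n x y ≤ ε ^ #(univ.filter fun j => x j ≠ y j) := by
  calc Wn W n x y ≤ ∏ j, if x j ≠ y j then ε else 1 :=
        prod_le_prod (fun j _ => hW0 _ (hx j) _) fun j _ => by
          split_ifs with h
          · exact W_le_of_ne hW0 hW1 hnoise (hx j) h
          · exact W_le_one hW0 hW1 (hx j) _
    _ = _ := by rw [prod_ite, prod_const, prod_const_one, mul_one]

theorem log_div_le_Csp (hdiag : ∀ a ∈ X, 0 < W a a) {n M : ℕ} (c : Fin M → Fin n → Y)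
    (hn : 1 ≤ n) (hM : 1 ≤ M) (hcX : ∀ m j, c m j ∈ X)
    (hc : ∀ m m' : Fin M, m ≠ m' → Wn W n (c m') (c m) = 0) : log M / n ≤ Csp X W := by
  refine le_csSup ⟨log (Fintype.card Y), ?_⟩ ⟨n, M, c, hn, hM, hcX, hc, rfl⟩
  rintro _ ⟨n, M, c, hn, hM, hcX, hc, rfl⟩
  have hinj : Function.Injective c := fun m m' h => by
    by_contra hne
    exact (Wn_self_pos hdiag (hcX m)).ne' (h ▸ hc m m' hne)
  have hcard : (M : ℝ) ≤ (Fintype.card Y : ℝ) ^ n := by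
    have := Fintype.card_le_of_injective c hinj
    simp only [Fintype.card_fin, Fintype.card_fun] at this
    exact_mod_cast this
  rw [div_le_iff₀ (by exact_mod_cast hn), mul_comm, ← Real.log_pow]
  exact log_le_log (by exact_mod_cast hM) hcard

end Channel

section Staircase

variable {Y : Type*} [Fintype Y] {X : Finset Y} {W : Y → Y → ℝ}

theorem nat_mul_log_le_of_staircase (hdiag : ∀ a ∈ X, 0 < W a a) {m M : ℕ} (hm : 1 ≤ m)
    (hM : 1 ≤ M) (c : Fin M → Fin m → Y) (hcX : ∀ i j, c i j ∈ X)
    (hc : ∀ i j, i < j → Wn W m (c i) (c j) = 0) {k : ℕ} (hk : 1 ≤ k) :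
    k * log M ≤ log k + log M + k * (m * Csp X W) := by
  set σ : (Fin k → Fin M) → ℕ := fun a => ∑ l, (a l : ℕ)
  have hσ : ∀ a ∈ (univ : Finset (Fin k → Fin M)), σ a ∈ range (k * M) := fun a _ => by
    have : σ a < ∑ _l : Fin k, M := sum_lt_sum_of_nonempty ⟨⟨0, hk⟩, mem_univ _⟩ fun l _ => (a l).2
    simpa [mul_comm] using this
  have hkM : (0 : ℝ) < k * M := by positivity
  obtain ⟨s, -, hs⟩ := exists_le_card_fiber_of_nsmul_le_card_of_maps_to hσ
    (nonempty_range_iff.2 (by positivity)) (b := (M : ℝ) ^ k / (k * M)) (by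
      rw [card_range, card_univ, Fintype.card_fun, Fintype.card_fin, Fintype.card_fin, nsmul_eq_mul]
      push_cast
      rw [mul_div_cancel₀ _ hkM.ne'])
  set T := univ.filter fun a => σ a = s
  have hT : (M : ℝ) ^ k ≤ k * M * #T := (div_le_iff₀' hkM).1 hs
  have hT1 : 1 ≤ #T := by
    have : (0 : ℝ) < #T := pos_of_mul_pos_right ((by positivity : (0 : ℝ) < M ^ k).trans_le hT)
      hkM.le
    exact_mod_cast this
  set a : Fin #T → Fin k → Fin M := fun i => T.equivFin.symm i
  have ha_inj : Function.Injective a := fun i i' h => T.equivFin.symm.injective (Subtype.ext h)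
  have ha_sum : ∀ i, σ (a i) = s := fun i => (mem_filter.1 (T.equivFin.symm i).2).2
  have hcode := log_div_le_Csp hdiag (fun i => flattenWords fun l => c (a i l))
    (Nat.mul_pos hm hk) hT1 (fun _ _ => hcX _ _) fun i i' hii' => by
      obtain ⟨l, hl⟩ := exists_lt_of_sum_eq_of_ne ((ha_sum i').trans (ha_sum i).symm) fun h =>
        hii' (ha_inj (funext fun l => Fin.ext (congrFun h l))).symm
      rw [Wn_flattenWords]
      exact prod_eq_zero (mem_univ l) (hc _ _ hl)
  rw [div_le_iff₀ (by exact_mod_cast Nat.mul_pos hm hk)] at hcode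
  calc k * log M = log ((M : ℝ) ^ k) := (Real.log_pow _ _).symm
    _ ≤ log (k * M * #T) := log_le_log (by positivity) hT
    _ = log k + log M + log #T := by
      rw [log_mul hkM.ne' (by positivity), log_mul (by positivity) (by positivity)]
    _ ≤ log k + log M + k * (m * Csp X W) := by push_cast at hcode; linarith

theorem card_le_exp_of_staircase (hdiag : ∀ a ∈ X, 0 < W a a) {m M : ℕ}
    (c : Fin M → Fin m → Y) (hcX : ∀ i j, c i j ∈ X)
    (hc : ∀ i j, i < j → Wn W m (c i) (c j) = 0) : (M : ℝ) ≤ exp (m * Csp X W) := by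
  rcases Nat.eq_zero_or_pos M with rfl | hM
  · simpa using (exp_pos _).le
  rcases Nat.eq_zero_or_pos m with rfl | hm
  · have hM1 : M ≤ 1 := by
      by_contra! h
      simpa [Wn] using hc ⟨0, hM⟩ ⟨1, h⟩ (by simp [Fin.lt_def])
    simpa using hM1
  rw [← exp_log (by exact_mod_cast hM : (0 : ℝ) < M)]
  exact exp_le_exp.2 (le_of_forall_nat_mul_le_log_add fun k hk =>
    nat_mul_log_le_of_staircase hdiag hm hM c hcX hc hk)

end Staircase

section Pattern

variable {Y : Type*} {n : ℕ}

noncomputable def mismatch (x y : Fin n → Y) : Fin n → Option (Y × Y) :=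
  fun j => if x j = y j then none else some (x j, y j)

def overwrite (g : Fin n → Option (Y × Y)) (x : Fin n → Y) : Fin n → Y :=
  fun j => (g j).elim (x j) Prod.snd

theorem overwrite_mismatch (x y : Fin n → Y) : overwrite (mismatch x y) x = y := by
  funext j
  by_cases h : x j = y j <;> simp [overwrite, mismatch, h]

theorem mismatch_eq_none_iff {x y : Fin n → Y} {j : Fin n} : mismatch x y j = none ↔ x j = y j := by
  by_cases h : x j = y j <;> simp [mismatch, h]

theorem mismatch_eq_some {x y : Fin n → Y} {j : Fin n} {q : Y × Y} (h : mismatch x y j = some q) :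
    x j = q.1 ∧ q.2 ≠ q.1 := by
  by_cases hj : x j = y j <;> simp only [mismatch, hj, if_true, if_false, reduceCtorEq,
    Option.some.injEq] at h
  subst h
  exact ⟨rfl, Ne.symm hj⟩

theorem Wn_overwrite_pos {X : Finset Y} {W : Y → Y → ℝ} (hW0 : ∀ a ∈ X, ∀ b, 0 ≤ W a b)
    {g : Fin n → Option (Y × Y)} {x x' : Fin n → Y} (hx'X : ∀ j, x' j ∈ X)
    (hx' : 0 < Wn W n x' (overwrite g x')) (h : 0 < Wn W n x' x) :
    0 < Wn W n x' (overwrite g x) := by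
  rw [Wn_pos_iff hW0 hx'X] at hx' h ⊢
  intro j
  cases hgj : g j with
  | none => simpa [overwrite, hgj] using h j
  | some q => simpa [overwrite, hgj] using hx' j

noncomputable def patternFiber (W : Y → Y → ℝ) (S : Finset (Fin n → Y))
    (g : Fin n → Option (Y × Y)) : Finset (Fin n → Y) :=
  S.filter fun x => mismatch x (overwrite g x) = g ∧ 0 < Wn W n x (overwrite g x)

theorem mem_patternFiber_apply {W : Y → Y → ℝ} {S : Finset (Fin n → Y)}
    {g : Fin n → Option (Y × Y)} {x : Fin n → Y} (hx : x ∈ patternFiber W S g) {j : Fin n}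
    {q : Y × Y} (hq : g j = some q) : x j = q.1 ∧ q.2 ≠ q.1 :=
  mismatch_eq_some ((congrFun (mem_filter.1 hx).2.1 j).trans hq)

theorem card_ne_overwrite_of_mem_patternFiber {W : Y → Y → ℝ} {S : Finset (Fin n → Y)}
    {g : Fin n → Option (Y × Y)} {x : Fin n → Y} (hx : x ∈ patternFiber W S g) :
    #(univ.filter fun j => x j ≠ overwrite g x j) = #(univ.filter fun j => g j ≠ none) :=
  congrArg card <| filter_congr fun j _ => by
    rw [ne_eq, ← mismatch_eq_none_iff, congrFun (mem_filter.1 hx).2.1 j]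

theorem sum_sum_filter_eq_sum_sum_patternFiber [Fintype Y] (W : Y → Y → ℝ)
    (S : Finset (Fin n → Y)) (f : (Fin n → Y) → (Fin n → Y) → ℝ) :
    ∑ y, ∑ x ∈ S.filter (fun x => 0 < Wn W n x y), f x y =
      ∑ g, ∑ x ∈ patternFiber W S g, f x (overwrite g x) := by
  rw [sum_sigma', sum_sigma']
  refine sum_nbij' (fun p => ⟨mismatch p.2 p.1, p.2⟩) (fun p => ⟨overwrite p.1 p.2, p.2⟩)
    ?_ ?_ ?_ ?_ ?_ <;>
  simp +contextual [patternFiber, overwrite_mismatch]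

noncomputable def patternWeight (X : Finset Y) (a ε : ℝ) : Option (Y × Y) → ℝ
  | none => a
  | some q => if q.1 ∈ X ∧ q.2 ≠ q.1 then ε else 0

theorem patternWeight_nonneg {X : Finset Y} {a ε : ℝ} (ha : 0 ≤ a) (hε : 0 ≤ ε)
    (o : Option (Y × Y)) : 0 ≤ patternWeight X a ε o := by
  rcases o with _ | q
  · exact ha
  · exact ite_nonneg hε le_rfl

theorem prod_patternWeight {X : Finset Y} {a ε : ℝ} {g : Fin n → Option (Y × Y)}
    (hg : ∀ j q, g j = some q → q.1 ∈ X ∧ q.2 ≠ q.1) :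
    ∏ j, patternWeight X a ε (g j) =
      ε ^ #(univ.filter fun j => g j ≠ none) * a ^ #(univ.filter fun j => g j = none) := by
  rw [← prod_const, ← prod_const, ← prod_filter_mul_prod_filter_not univ fun j => g j ≠ none]
  simp only [not_not]
  congr 1 <;> refine prod_congr rfl fun j hj => ?_
  · obtain ⟨q, hq⟩ := Option.ne_none_iff_exists'.1 (mem_filter.1 hj).2
    simp [hq, patternWeight, hg j q hq]
  · simp [(mem_filter.1 hj).2, patternWeight]

theorem sum_prod_patternWeight [Fintype Y] (X : Finset Y) (a ε : ℝ) :
    ∑ g : Fin n → Option (Y × Y), ∏ j, patternWeight X a ε (g j) =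
      (a + ε * #X * (Fintype.card Y - 1)) ^ n := by
  rw [← Fintype.prod_sum (fun _ => patternWeight X a ε), prod_const, card_univ,
    Fintype.card_fin, Fintype.sum_option]
  have hrow (y : Y) : ∑ b : Y, (if b ≠ y then ε else 0) = ε * (Fintype.card Y - 1) := by
    simp [sum_ite, filter_ne', Nat.cast_pred (Fintype.card_pos_iff.2 ⟨y⟩), mul_comm]
  simp only [patternWeight, Fintype.sum_prod_type, ite_and, sum_ite_irrel, sum_const_zero, hrow]
  rw [← sum_filter, sum_const, nsmul_eq_mul, filter_mem_eq_inter, univ_inter]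
  ring

end Pattern

section Fiber

variable {Y : Type*} [Fintype Y] {X : Finset Y} {W : Y → Y → ℝ} {n : ℕ}

theorem sum_inv_card_le_exp (hW0 : ∀ a ∈ X, ∀ b, 0 ≤ W a b) (hdiag : ∀ a ∈ X, 0 < W a a)
    (U : Finset (Fin n → Y)) (hUX : ∀ x ∈ U, ∀ j, x j ∈ X) (s : Finset (Fin n))
    (hU : ∀ x ∈ U, ∀ x' ∈ U, ∀ j ∉ s, x j = x' j) :
    ∑ x ∈ U, (#(U.filter fun x' => 0 < Wn W n x' x) : ℝ)⁻¹ ≤ exp (#s * Csp X W) := by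
  obtain ⟨M, c, hcU, hc, hsum⟩ := exists_staircase_sum_inv_card_le
    (fun x' x => 0 < Wn W n x' x) U fun x hx => Wn_self_pos hdiag (hUX x hx)
  refine hsum.trans (card_le_exp_of_staircase hdiag (fun i => c i ∘ s.orderEmbOfFin rfl)
    (fun i l => hUX _ (hcU i) _) fun i i' hii' => ?_)
  obtain ⟨j, hj⟩ : ∃ j, ¬ 0 < W (c i j) (c i' j) := by
    simpa [Wn_pos_iff hW0 (hUX _ (hcU i))] using hc i i' hii'
  have hjs : j ∈ s := by
    by_contra hjs
    exact hj (by rw [hU _ (hcU i) _ (hcU i') j hjs]; exact hdiag _ (hUX _ (hcU i') j))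
  obtain ⟨l, rfl⟩ : j ∈ Set.range (s.orderEmbOfFin rfl) := by
    rwa [range_orderEmbOfFin]
  exact prod_eq_zero (mem_univ l) ((hW0 _ (hUX _ (hcU i) _) _).antisymm' (not_lt.1 hj))

theorem sum_patternFiber_le {ε : ℝ} (hε0 : 0 ≤ ε) (hW0 : ∀ a ∈ X, ∀ b, 0 ≤ W a b)
    (hW1 : ∀ a ∈ X, ∑ b, W a b = 1) (hnoise : ∀ a ∈ X, 1 - ε ≤ W a a)
    (hdiag : ∀ a ∈ X, 0 < W a a) (S : Finset (Fin n → Y)) (hSX : ∀ x ∈ S, ∀ j, x j ∈ X)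
    (g : Fin n → Option (Y × Y)) :
    ∑ x ∈ patternFiber W S g,
        Wn W n x (overwrite g x) / #(S.filter fun x' => 0 < Wn W n x' (overwrite g x)) ≤
      ∏ j, patternWeight X (exp (Csp X W)) ε (g j) := by
  set U := patternFiber W S g
  rcases U.eq_empty_or_nonempty with hU | ⟨x₀, hx₀⟩
  · rw [hU, sum_empty]
    exact prod_nonneg fun j _ => patternWeight_nonneg (exp_pos _).le hε0 _
  have hUS : ∀ x ∈ U, x ∈ S := fun x hx => (mem_filter.1 hx).1
  have hUX : ∀ x ∈ U, ∀ j, x j ∈ X := fun x hx => hSX x (hUS x hx)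
  have hnbhd : ∀ x ∈ U, U.filter (fun x' => 0 < Wn W n x' x) ⊆
      S.filter fun x' => 0 < Wn W n x' (overwrite g x) := fun x _ x' hx' => by
    obtain ⟨hx'U, hpos⟩ := mem_filter.1 hx'
    exact mem_filter.2 ⟨hUS x' hx'U,
      Wn_overwrite_pos hW0 (hUX x' hx'U) (mem_filter.1 hx'U).2.2 hpos⟩
  have hagree : ∀ x ∈ U, ∀ x' ∈ U, ∀ j ∉ univ.filter (fun j => g j = none), x j = x' j := by
    intro x hx x' hx' j hj
    obtain ⟨q, hq⟩ := Option.ne_none_iff_exists'.1 (by simpa using hj)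
    rw [(mem_patternFiber_apply hx hq).1, (mem_patternFiber_apply hx' hq).1]
  calc _ ≤ ∑ x ∈ U, ε ^ #(univ.filter fun j => g j ≠ none) /
          #(U.filter fun x' => 0 < Wn W n x' x) :=
        sum_le_sum fun x hx => div_le_div₀ (pow_nonneg hε0 _)
          (card_ne_overwrite_of_mem_patternFiber hx ▸ Wn_le_pow_card_ne hW0 hW1 hnoise (hUX x hx) _)
          (by exact_mod_cast card_pos.2 ⟨x, mem_filter.2 ⟨hx, Wn_self_pos hdiag (hUX x hx)⟩⟩)
          (by exact_mod_cast card_le_card (hnbhd x hx))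
    _ = ε ^ #(univ.filter fun j => g j ≠ none) *
          ∑ x ∈ U, (#(U.filter fun x' => 0 < Wn W n x' x) : ℝ)⁻¹ := by
        simp only [div_eq_mul_inv, mul_sum]
    _ ≤ ε ^ #(univ.filter fun j => g j ≠ none) *
          exp (#(univ.filter fun j => g j = none) * Csp X W) :=
        mul_le_mul_of_nonneg_left (sum_inv_card_le_exp hW0 hdiag U hUX _ hagree)
          (pow_nonneg hε0 _)
    _ = ∏ j, patternWeight X (exp (Csp X W)) ε (g j) := by
        refine (congrArg _ (exp_nat_mul _ _)).trans (prod_patternWeight fun j q hq => ?_).symm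
        obtain ⟨hxq, hq⟩ := mem_patternFiber_apply hx₀ hq
        exact ⟨hxq ▸ hUX x₀ hx₀ j, hq⟩

end Fiber

theorem sum_ratio_le_pow_general {Y : Type*} [Fintype Y] (X : Finset Y)
    (W : Y → Y → ℝ) (ε : ℝ) (hε0 : 0 ≤ ε) (hε1 : ε < 1)
    (hW0 : ∀ x ∈ X, ∀ y, 0 ≤ W x y)
    (hW1 : ∀ x ∈ X, ∑ y, W x y = 1)
    (hnoise : ∀ x ∈ X, 1 - ε ≤ W x x)
    (n : ℕ) (P : (Fin n → Y) → ℝ)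
    (hPX : ∀ x, P x ≠ 0 → ∀ j, x j ∈ X)
    (hPunif : ∀ x, P x ≠ 0 →
      P x = 1 / ((Finset.univ.filter (fun x' : Fin n → Y => P x' ≠ 0)).card : ℝ)) :
    ∑ y ∈ Finset.univ.filter (fun y : Fin n → Y => 0 < ∑ x, P x * Wn W n x y),
        (∑ x, P x * Wn W n x y) /
          (∑ x ∈ Finset.univ.filter (fun x : Fin n → Y => 0 < Wn W n x y), P x)
      ≤ (Real.exp (Csp X W) + ε * X.card * (Fintype.card Y - 1)) ^ n := by
  have hdiag : ∀ a ∈ X, 0 < W a a := fun a ha => by linarith [hnoise a ha]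
  set S := univ.filter fun x : Fin n → Y => P x ≠ 0
  have hSX : ∀ x ∈ S, ∀ j, x j ∈ X := fun x hx => hPX x (mem_filter.1 hx).2
  calc _ = ∑ y ∈ univ.filter (fun y : Fin n → Y => 0 < ∑ x, P x * Wn W n x y),
          ∑ x ∈ S.filter (fun x => 0 < Wn W n x y),
            Wn W n x y / #(S.filter fun x => 0 < Wn W n x y) :=
        sum_congr rfl fun y hy => sum_mul_div_sum_filter_pos_eq hPunif
          (fun x hx => Wn_nonneg hW0 (hPX x hx) y) (mem_filter.1 hy).2
    _ ≤ ∑ y, ∑ x ∈ S.filter (fun x => 0 < Wn W n x y),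
            Wn W n x y / #(S.filter fun x => 0 < Wn W n x y) :=
        sum_le_sum_of_subset_of_nonneg (filter_subset _ _) fun y _ _ =>
          sum_nonneg fun x hx => div_nonneg (Wn_nonneg hW0 (hSX x (mem_filter.1 hx).1) y)
            (Nat.cast_nonneg _)
    _ = ∑ g, ∑ x ∈ patternFiber W S g,
          Wn W n x (overwrite g x) / #(S.filter fun x' => 0 < Wn W n x' (overwrite g x)) :=
        sum_sum_filter_eq_sum_sum_patternFiber W S _
    _ ≤ ∑ g, ∏ j, patternWeight X (exp (Csp X W)) ε (g j) :=
        sum_le_sum fun g _ => sum_patternFiber_le hε0 hW0 hW1 hnoise hdiag S hSX g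
    _ = _ := sum_prod_patternWeight X _ ε

/-- For an `ε`-noise channel `W` and any PMF `P` on `Xⁿ` that is uniform over
its support,
`∑_{y ∈ supp(PWⁿ)} (PWⁿ)(y) / P(Xⁿ(y)) ≤ (e^{C_sp} + ε |X| (|Y|-1))ⁿ`. -/
theorem sum_ratio_le_pow {Y : Type*} [Fintype Y] (X : Finset Y) (hX : X.Nonempty)
    (W : Y → Y → ℝ) (ε : ℝ) (hε0 : 0 ≤ ε) (hε1 : ε < 1)
    (hW0 : ∀ x ∈ X, ∀ y, 0 ≤ W x y)
    (hW1 : ∀ x ∈ X, ∑ y, W x y = 1)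
    (hnoise : ∀ x ∈ X, 1 - ε ≤ W x x)
    (n : ℕ) (hn : 1 ≤ n) (P : (Fin n → Y) → ℝ)
    (hP0 : ∀ x, 0 ≤ P x) (hP1 : ∑ x, P x = 1)
    (hPX : ∀ x, P x ≠ 0 → ∀ j, x j ∈ X)
    (hPunif : ∀ x, P x ≠ 0 →
      P x = 1 / ((Finset.univ.filter (fun x' : Fin n → Y => P x' ≠ 0)).card : ℝ)) :
    ∑ y ∈ Finset.univ.filter (fun y : Fin n → Y => 0 < ∑ x, P x * Wn W n x y),
        (∑ x, P x * Wn W n x y) /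
          (∑ x ∈ Finset.univ.filter (fun x : Fin n → Y => 0 < Wn W n x y), P x)
      ≤ (Real.exp (Csp X W) + ε * X.card * (Fintype.card Y - 1)) ^ n :=
  sum_ratio_le_pow_general X W ε hε0 hε1 hW0 hW1 hnoise n P hPX hPunif
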